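/- For the Gerber–Dickson risk process whose claims have support contained in {0,1,…,m} for an integer m ≥ 2 and f(m) > 0, the ruin probability satisfies, for every integer u ≥ m, the order-(m−1) recurrence ψ(u) = ∑_{k=0}^{m−1} F̄(k)·ψ(u−k), where F̄(k) = ∑_{j=k+1}^{m} f(j). -/

import Mathlib

open MeasureTheory ProbabilityTheory

/-!
The law of the claim sequence is the product measure `ν^ℕ` on paths `ℕ → ℕ`, so everything
happens on path space. Conditioning on the first claim `y ≤ m` gives, for `u ≥ m`,
`ψ(u) = ∑_y f(y) ψ(u + 1 - y)`: the head of the path is independent of its tail, and the tail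
is again distributed as `ν^ℕ`. Exchanging summations and telescoping turns this one-step equation
into the statement that `D(u) = ψ(u) - ∑_{k<m} F̄(k) ψ(u - k)` is constant for `u ≥ m`. Finally
`ψ(u) → 0` by the strong law of large numbers (`E[Y] < 1`), hence `D(u) → 0` and `D = 0`.
-/

namespace GerberDickson

open Filter Finset Topology Measure

lemma eq_of_tendsto_of_succ_eq {α : Type*} [TopologicalSpace α] [T2Space α] {D : ℕ → α}
    {m : ℕ} {a : α} (hD : ∀ n, m ≤ n → D (n + 1) = D n) (hlim : Tendsto D atTop (𝓝 a))
    {n : ℕ} (hn : m ≤ n) : D n = a := by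
  have hconst : ∀ n, m ≤ n → D n = D m := fun n hn =>
    Nat.le_induction rfl (fun k hk ih => (hD k hk).trans ih) n hn
  have : Tendsto D atTop (𝓝 (D m)) :=
    tendsto_const_nhds.congr' (eventually_atTop.2 ⟨m, fun k hk => (hconst k hk).symm⟩)
  rw [hconst n hn, tendsto_nhds_unique this hlim]

lemma sum_tailSum_mul_sub (p ψ : ℕ → ℝ) (m u : ℕ) (hp : ∑ j ∈ range (m + 1), p j = 1) :
    ∑ k ∈ range m, (∑ j ∈ Icc (k + 1) m, p j) * (ψ (u + 1 - k) - ψ (u - k)) =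
      ψ (u + 1) - ∑ j ∈ range (m + 1), p j * ψ (u + 1 - j) := by
  calc ∑ k ∈ range m, (∑ j ∈ Icc (k + 1) m, p j) * (ψ (u + 1 - k) - ψ (u - k))
      = ∑ j ∈ range (m + 1), ∑ k ∈ range j, p j * (ψ (u + 1 - k) - ψ (u + 1 - (k + 1))) := by
        simp_rw [sum_mul, Nat.add_sub_add_right]
        exact sum_comm' fun k j => by simp only [mem_range, mem_Icc]; omega
    _ = ∑ j ∈ range (m + 1), p j * (ψ (u + 1) - ψ (u + 1 - j)) := by
        simp_rw [← mul_sum, sum_range_sub' (fun k => ψ (u + 1 - k)), Nat.sub_zero]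
    _ = ψ (u + 1) - ∑ j ∈ range (m + 1), p j * ψ (u + 1 - j) := by
        simp_rw [mul_sub, sum_sub_distrib, ← sum_mul, hp, one_mul]

def ruinSet (u : ℕ) : Set (ℕ → ℕ) :=
  {x | ∃ t : ℕ, 1 ≤ t ∧ (u : ℤ) + t - ∑ j ∈ range t, (x j : ℤ) ≤ 0}

lemma measurableSet_ruinSet (u : ℕ) : MeasurableSet (ruinSet u) := by
  unfold ruinSet; measurability

lemma ruinSet_antitone : Antitone ruinSet := by
  rintro u v huv x ⟨t, ht, hx⟩
  exact ⟨t, ht, by omega⟩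

lemma mem_ruinSet_iff_tail {x : ℕ → ℕ} {u : ℕ} (hx : x 0 ≤ u) :
    x ∈ ruinSet u ↔ (fun j => x (j + 1)) ∈ ruinSet (u + 1 - x 0) := by
  simp only [ruinSet, Set.mem_ofPred_eq]
  constructor
  · rintro ⟨_ | t, ht, hle⟩
    · omega
    rw [sum_range_succ'] at hle
    refine ⟨t, ?_, by omega⟩
    rcases t with _ | t
    · simp only [range_zero, sum_empty, zero_add] at hle
      omega
    · omega
  · rintro ⟨t, ht, hle⟩
    refine ⟨t + 1, by omega, ?_⟩
    rw [sum_range_succ']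
    omega

/-- Once the claims stay below the elapsed time, the capital `∑_{j<N} x j` is never exhausted. -/
lemma exists_notMem_ruinSet {x : ℕ → ℕ}
    (hx : ∀ᶠ n in atTop, ∑ j ∈ range n, (x j : ℝ) < n) : ∃ u, x ∉ ruinSet u := by
  obtain ⟨N, hN⟩ := eventually_atTop.1 hx
  refine ⟨∑ j ∈ range N, x j, fun ⟨t, ht, hle⟩ => ?_⟩
  push_cast [← Nat.cast_sum] at hle
  rcases le_total N t with hNt | htN
  · have : ∑ j ∈ range t, x j < t := by exact_mod_cast hN t hNt
    omega
  · have := sum_le_sum_of_subset (f := x) (range_subset_range.2 htN)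
    omega

section ProductMeasure

variable {β : Type*} [MeasurableSpace β] (ν : Measure β) [IsProbabilityMeasure ν]

lemma measurePreserving_tail_infinitePi :
    MeasurePreserving (fun (x : ℕ → β) i => x (i + 1)) (infinitePi fun _ => ν)
      (infinitePi fun _ => ν) :=
  ⟨by fun_prop, map_infinitePi_infinitePi_of_inj (add_left_injective 1)⟩

lemma indepFun_head_tail :
    IndepFun (fun x : ℕ → β => x 0) (fun x i => x (i + 1)) (infinitePi fun _ => ν) := by
  have h := (iIndepFun_iff_iIndep _ _ _).1 <|
    iIndepFun_infinitePi (P := fun _ : ℕ => ν) (X := fun _ => id) fun _ => measurable_id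
  have hST : Disjoint ({0} : Set ℕ) (Set.Ioi 0) := by simp
  have := indep_iSup_of_disjoint (fun i => (measurable_pi_apply i).comap_le) h hST
  rw [IndepFun_iff_Indep]
  refine indep_of_indep_of_le_right (indep_of_indep_of_le_left this ?_) ?_
  · exact le_iSup₂_of_le (f := fun i (_ : i ∈ ({0} : Set ℕ)) => _) 0 rfl le_rfl
  · rw [MeasurableSpace.pi, MeasurableSpace.comap_iSup]
    refine iSup_le fun i => ?_
    rw [MeasurableSpace.comap_comp]
    exact le_iSup₂_of_le (f := fun i (_ : i ∈ Set.Ioi 0) => _) (i + 1) (Nat.succ_pos i) le_rfl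

lemma infinitePi_head_inter_tail [MeasurableSingletonClass β] (b : β) {S : Set (ℕ → β)}
    (hS : MeasurableSet S) :
    infinitePi (fun _ => ν) ({x | x 0 = b} ∩ (fun x i => x (i + 1)) ⁻¹' S) =
      ν {b} * infinitePi (fun _ => ν) S := by
  have := (indepFun_head_tail ν).measure_inter_preimage_eq_mul _ _ (measurableSet_singleton b) hS
  rwa [(measurePreserving_eval_infinitePi (fun _ : ℕ => ν) 0).measure_preimage
    (measurableSet_singleton b).nullMeasurableSet,
    (measurePreserving_tail_infinitePi ν).measure_preimage hS.nullMeasurableSet] at this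

end ProductMeasure

lemma map_seq_eq_infinitePi {Ω β : Type*} [MeasurableSpace Ω] [MeasurableSpace β]
    {P : Measure Ω} [IsProbabilityMeasure P] {Y : ℕ → Ω → β} (hindep : iIndepFun Y P)
    (hident : ∀ j, IdentDistrib (Y j) (Y 0) P P) :
    P.map (fun ω i => Y i ω) = infinitePi fun _ => P.map (Y 0) := by
  rw [hindep.map_fun_eq_infinitePi_map₀' fun j => (hident j).aemeasurable_fst]
  congr 1
  funext j
  exact (hident j).map_eq

section RuinProbability

variable (ν : Measure ℕ) {m : ℕ}

/-- The ruin probability `ψ(u)` when the claims are i.i.d. with law `ν`. -/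
noncomputable def ruinProb (u : ℕ) : ℝ := (infinitePi fun _ : ℕ => ν).real (ruinSet u)

lemma measure_compl_range_eq_zero (hsupp : ∀ y, m < y → ν {y} = 0) :
    ν (↑(range (m + 1)))ᶜ = 0 :=
  mem_ae_iff.1 <| ae_iff_of_countable.2 fun y hy =>
    mem_range_succ_iff.2 <| not_lt.1 fun h => hy (hsupp y h)

variable [IsProbabilityMeasure ν]

lemma sum_measureReal_singleton_eq_one (hsupp : ∀ y, m < y → ν {y} = 0) :
    ∑ y ∈ range (m + 1), ν.real {y} = 1 := by
  rw [sum_measureReal_singleton, measureReal_def,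
    (prob_compl_eq_zero_iff (Finset.measurableSet _)).1 (measure_compl_range_eq_zero ν hsupp),
    ENNReal.toReal_one]

lemma infinitePi_ruinSet_eq_sum (hsupp : ∀ y, m < y → ν {y} = 0) {u : ℕ} (hu : m ≤ u) :
    infinitePi (fun _ => ν) (ruinSet u) =
      ∑ y ∈ range (m + 1), ν {y} * infinitePi (fun _ => ν) (ruinSet (u + 1 - y)) := by
  set μ := infinitePi fun _ : ℕ => ν
  have hhead : μ ((fun x : ℕ → ℕ => x 0) ⁻¹' ↑(range (m + 1)))ᶜ = 0 := by
    rw [← Set.preimage_compl, (measurePreserving_eval_infinitePi _ 0).measure_preimage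
      (Finset.measurableSet _).compl.nullMeasurableSet]
    exact measure_compl_range_eq_zero ν hsupp
  have hfiber : ∀ y ∈ range (m + 1), μ.restrict (ruinSet u) ((fun x => x 0) ⁻¹' {y}) =
      ν {y} * μ (ruinSet (u + 1 - y)) := by
    intro y hy
    rw [restrict_apply (measurable_pi_apply 0 (measurableSet_singleton y)),
      ← infinitePi_head_inter_tail ν y (measurableSet_ruinSet _)]
    congr 1
    ext x
    simp only [Set.mem_inter_iff, Set.mem_preimage, Set.mem_singleton_iff, Set.mem_ofPred_eq]
    refine and_congr_right fun hx => ?_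
    subst hx
    exact mem_ruinSet_iff_tail ((mem_range_succ_iff.1 hy).trans hu)
  rw [← sum_congr rfl hfiber, sum_measure_preimage_singleton (μ := μ.restrict (ruinSet u))
    (f := fun x : ℕ → ℕ => x 0) _ fun y _ => measurable_pi_apply 0 (measurableSet_singleton y),
    restrict_apply (measurable_pi_apply 0 (Finset.measurableSet _)), Set.inter_comm,
    measure_inter_conull hhead]

lemma ruinProb_eq_sum (hsupp : ∀ y, m < y → ν {y} = 0) {u : ℕ} (hu : m ≤ u) :
    ruinProb ν u = ∑ y ∈ range (m + 1), ν.real {y} * ruinProb ν (u + 1 - y) := by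
  simp only [ruinProb, measureReal_def, infinitePi_ruinSet_eq_sum ν hsupp hu]
  rw [ENNReal.toReal_sum fun y _ => by finiteness]
  simp only [ENNReal.toReal_mul]

lemma infinitePi_iInter_ruinSet_eq_zero (hint : Integrable (fun y : ℕ => (y : ℝ)) ν)
    (hmean : ∫ y, (y : ℝ) ∂ν < 1) : infinitePi (fun _ => ν) (⋂ u, ruinSet u) = 0 := by
  set μ := infinitePi fun _ : ℕ => ν
  set X : ℕ → (ℕ → ℕ) → ℝ := fun i x => x i
  have hindep : iIndepFun X μ :=
    iIndepFun_infinitePi (P := fun _ : ℕ => ν) (X := fun _ (y : ℕ) => (y : ℝ))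
      fun _ => measurable_from_nat
  have hmap : ∀ i, μ.map (fun x => x i) = ν := infinitePi_map_eval _
  have hident : ∀ i, IdentDistrib (X i) (X 0) μ μ := fun i =>
    (IdentDistrib.mk (measurable_pi_apply i).aemeasurable (measurable_pi_apply 0).aemeasurable
      ((hmap i).trans (hmap 0).symm)).comp measurable_from_nat
  have hint' : Integrable (X 0) μ := by
    rw [← hmap 0] at hint
    exact hint.comp_measurable (measurable_pi_apply 0)
  have hmean' : μ[X 0] < 1 := by
    rwa [← integral_map (measurable_pi_apply 0).aemeasurable (by fun_prop), hmap 0]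
  have hslln := strong_law_ae_real X hint' (fun i j hij => hindep.indepFun hij) hident
  rw [measure_eq_zero_iff_ae_notMem]
  filter_upwards [hslln] with x hx
  obtain ⟨u, hu⟩ := exists_notMem_ruinSet (x := x) <| by
    filter_upwards [hx.eventually (gt_mem_nhds hmean'), eventually_gt_atTop 0] with n hn hpos
    rwa [div_lt_one (by exact_mod_cast hpos)] at hn
  exact fun h => hu (Set.mem_iInter.1 h u)

lemma tendsto_ruinProb_atTop (hint : Integrable (fun y : ℕ => (y : ℝ)) ν)
    (hmean : ∫ y, (y : ℝ) ∂ν < 1) : Tendsto (ruinProb ν) atTop (𝓝 0) := by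
  have h := tendsto_measure_iInter_atTop (μ := infinitePi fun _ : ℕ => ν)
    (fun u => (measurableSet_ruinSet u).nullMeasurableSet) ruinSet_antitone ⟨0, by finiteness⟩
  rw [infinitePi_iInter_ruinSet_eq_zero ν hint hmean] at h
  exact (ENNReal.tendsto_toReal ENNReal.zero_ne_top).comp h

lemma integrable_natCast_of_finite_support (hsupp : ∀ y, m < y → ν {y} = 0) :
    Integrable (fun y : ℕ => (y : ℝ)) ν := by
  refine Integrable.of_mem_Icc 0 m (by fun_prop) ?_
  filter_upwards [mem_ae_iff.2 (measure_compl_range_eq_zero ν hsupp)] with y hy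
  simp only [coe_range, Set.mem_Iio] at hy
  exact ⟨by positivity, by exact_mod_cast Nat.lt_succ_iff.1 hy⟩

lemma integral_natCast_of_finite_support (hsupp : ∀ y, m < y → ν {y} = 0) :
    ∫ y, (y : ℝ) ∂ν = ∑ y ∈ range (m + 1), (y : ℝ) * ν.real {y} := by
  rw [integral_countable (integrable_natCast_of_finite_support ν hsupp),
    tsum_eq_sum (s := range (m + 1))]
  · simp_rw [smul_eq_mul, mul_comm]
  · intro y hy
    simp [measureReal_def, hsupp y (by simpa using hy)]

theorem ruinProb_eq_sum_tailSum (hsupp : ∀ y, m < y → ν {y} = 0)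
    (hmean : ∑ y ∈ range (m + 1), (y : ℝ) * ν.real {y} < 1) {u : ℕ} (hu : m ≤ u) :
    ruinProb ν u = ∑ k ∈ range m, (∑ j ∈ Icc (k + 1) m, ν.real {j}) * ruinProb ν (u - k) := by
  set F : ℕ → ℝ := fun k => ∑ j ∈ Icc (k + 1) m, ν.real {j}
  set D : ℕ → ℝ := fun u => ruinProb ν u - ∑ k ∈ range m, F k * ruinProb ν (u - k)
  have hstep : ∀ n, m ≤ n → D (n + 1) = D n := by
    intro n hn
    have h := sum_tailSum_mul_sub (fun j => ν.real {j}) (ruinProb ν) m n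
      (sum_measureReal_singleton_eq_one ν hsupp)
    rw [← ruinProb_eq_sum ν hsupp hn] at h
    simp only [D, mul_sub, sum_sub_distrib] at h ⊢
    linarith
  have hψ := tendsto_ruinProb_atTop ν (integrable_natCast_of_finite_support ν hsupp)
    (by rwa [integral_natCast_of_finite_support ν hsupp])
  have hlim : Tendsto D atTop (𝓝 0) := by
    simpa using hψ.sub (tendsto_finsetSum _ fun k _ =>
      (hψ.comp (tendsto_sub_atTop_nat k)).const_mul (F k))
  exact sub_eq_zero.1 (eq_of_tendsto_of_succ_eq hstep hlim hu)

end RuinProbability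

end GerberDickson

open GerberDickson Finset Measure in
theorem stmt_5_general
    {Ω : Type*} [MeasurableSpace Ω] (P : Measure Ω) [IsProbabilityMeasure P]
    (Y : ℕ → Ω → ℕ)
    (hindep : iIndepFun Y P)
    (hident : ∀ j, IdentDistrib (Y j) (Y 0) P P)
    (f : ℕ → ℝ)
    (hf : ∀ y, (P {ω | Y 0 ω = y}).toReal = f y)
    (hnet : ∑' y : ℕ, (y : ℝ) * f y < 1)
    (m : ℕ)
    (hsupp : ∀ y, m < y → f y = 0)
    (ψ : ℕ → ℝ)
    (hψ : ∀ u : ℕ, ψ u = (P {ω | ∃ t : ℕ, 1 ≤ t ∧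
        (u : ℤ) + t - ∑ j ∈ Finset.range t, (Y j ω : ℤ) ≤ 0}).toReal) :
    ∀ u : ℕ, m ≤ u →
      ψ u = ∑ k ∈ Finset.range m, (∑ j ∈ Finset.Icc (k + 1) m, f j) * ψ (u - k) := by
  set ν := P.map (Y 0)
  have : IsProbabilityMeasure ν := isProbabilityMeasure_map (hident 0).aemeasurable_fst
  have hfν : ∀ y, ν.real {y} = f y := fun y => by
    rw [← hf, measureReal_def,
      map_apply_of_aemeasurable (hident 0).aemeasurable_fst (measurableSet_singleton y)]
    rfl
  have hψν : ∀ u, ψ u = ruinProb ν u := fun u => by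
    rw [hψ, ruinProb, measureReal_def, ← map_seq_eq_infinitePi hindep hident,
      map_apply_of_aemeasurable (aemeasurable_pi_lambda _ fun j => (hident j).aemeasurable_fst)
        (measurableSet_ruinSet u)]
    rfl
  have hsuppν : ∀ y, m < y → ν {y} = 0 := fun y hy =>
    (measureReal_eq_zero_iff).1 ((hfν y).trans (hsupp y hy))
  have hmean : ∑ y ∈ range (m + 1), (y : ℝ) * ν.real {y} < 1 := by
    simp_rw [hfν]
    calc _ = ∑' y : ℕ, (y : ℝ) * f y :=
          (tsum_eq_sum fun y hy => by rw [hsupp y (by simpa using hy), mul_zero]).symm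
      _ < 1 := hnet
  intro u hu
  simp_rw [hψν, ← hfν]
  exact ruinProb_eq_sum_tailSum ν hsuppν hmean hu

/-- For the Gerber–Dickson risk process with claims supported in `{0,…,m}`, `m ≥ 2`,
`f(m) > 0`, for every `u ≥ m`: `ψ(u) = ∑_{k=0}^{m−1} F̄(k)·ψ(u−k)`,
where `F̄(k) = ∑_{j=k+1}^{m} f(j)`. -/
theorem stmt_5
    {Ω : Type*} [MeasurableSpace Ω] (P : Measure Ω) [IsProbabilityMeasure P]
    (Y : ℕ → Ω → ℕ) (hYmeas : ∀ j, Measurable (Y j))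
    (hindep : iIndepFun Y P)
    (hident : ∀ j, IdentDistrib (Y j) (Y 0) P P)
    (f : ℕ → ℝ)
    (hf : ∀ y, (P {ω | Y 0 ω = y}).toReal = f y)
    (hsummable : Summable (fun y : ℕ => (y : ℝ) * f y))
    (hnet : ∑' y : ℕ, (y : ℝ) * f y < 1)
    (m : ℕ) (hm : 2 ≤ m)
    (hsupp : ∀ y, m < y → f y = 0) (hfm : 0 < f m)
    (ψ : ℕ → ℝ)
    (hψ : ∀ u : ℕ, ψ u = (P {ω | ∃ t : ℕ, 1 ≤ t ∧
        (u : ℤ) + t - ∑ j ∈ Finset.range t, (Y j ω : ℤ) ≤ 0}).toReal) :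
    ∀ u : ℕ, m ≤ u →
      ψ u = ∑ k ∈ Finset.range m, (∑ j ∈ Finset.Icc (k + 1) m, f j) * ψ (u - k) :=
  stmt_5_general P Y hindep hident f hf hnet m hsupp ψ hψ
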